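/- arXiv:2212.06446 — 2 statements merged into one kernel-verified Lean document; each statement's English description precedes it below -/
import Mathlib

section
/- Let A = K[P_sat]. A nonzero M-homogeneous derivation ∂ of A is locally nilpotent if and only if there exist an extremal ray ρ of σ with primitive lattice generator n_ρ, a Demazure root e associated to ρ, and λ ∈ K \ {0} such that ∂(χ^m) = λ·⟨m, n_ρ⟩·χ^{m+e} for all m ∈ P_sat. -/
set_option synthInstance.maxHeartbeats 1000000
set_option maxHeartbeats 1000000

noncomputable section

namespace ToricML

open Finsupp

/-- The Laurent polynomial algebra `K[M]`, where `M = ℤⁿ`. -/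
abbrev Laurent (K : Type) [Field K] (n : ℕ) := AddMonoidAlgebra K (Fin n → ℤ)

/-- The character `χ^m` in `K[M]`. -/
def chi (K : Type) [Field K] (n : ℕ) (m : Fin n → ℤ) : Laurent K n := AddMonoidAlgebra.single m 1

/-- The monoid algebra `K[P] = ⊕_{m ∈ P} K·χ^m` as a subalgebra of `K[M]`. -/
def monAlg (K : Type) [Field K] (n : ℕ) (P : AddSubmonoid (Fin n → ℤ)) :
    Subalgebra K (Laurent K n) where
  carrier := {f | ∀ m ∈ f.coeff.support, m ∈ P}
  mul_mem' := by
    classical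
    intro a b ha hb m hm
    have h := AddMonoidAlgebra.support_coeff_mul_subset a b hm
    rw [Finset.mem_add] at h
    obtain ⟨x, hx, y, hy, rfl⟩ := h
    exact P.add_mem (ha _ hx) (hb _ hy)
  add_mem' := by
    intro a b ha hb m hm
    rcases Finset.mem_union.mp (Finsupp.support_add hm) with h | h
    · exact ha _ h
    · exact hb _ h
  algebraMap_mem' := by
    intro c m hm
    rw [AddMonoidAlgebra.coe_algebraMap] at hm
    have := Finsupp.support_single_subset hm
    rw [Finset.mem_singleton] at this
    rw [this]
    exact P.zero_mem

lemma chi_mem (K : Type) [Field K] (n : ℕ) (P : AddSubmonoid (Fin n → ℤ))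
    {m : Fin n → ℤ} (hm : m ∈ P) : chi K n m ∈ monAlg K n P := by
  intro x hx
  have := Finsupp.support_single_subset hx
  rw [Finset.mem_singleton] at this
  rwa [this]

/-- The character `χ^m` as an element of `K[P]`. -/
def chiP (K : Type) [Field K] (n : ℕ) (P : AddSubmonoid (Fin n → ℤ))
    (m : Fin n → ℤ) (hm : m ∈ P) : monAlg K n P :=
  ⟨chi K n m, chi_mem K n P hm⟩

/-- A derivation is locally nilpotent if every element is killed by some power. -/
def IsLND {R A : Type*} [CommRing R] [CommRing A] [Algebra R A]
    (δ : Derivation R A A) : Prop :=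
  ∀ f : A, ∃ k : ℕ, (δ.toLinearMap ^ k) f = 0

/-- A slice of a derivation is an element mapped to `1`. -/
def HasSlice {R A : Type*} [CommRing R] [CommRing A] [Algebra R A]
    (δ : Derivation R A A) : Prop :=
  ∃ s : A, δ s = 1

/-- A derivation of `K[P]` is `M`-homogeneous of degree `e` if it maps `K·χ^m`
into `K·χ^{m+e}` for all `m ∈ P`. -/
def IsHomog (K : Type) [Field K] (n : ℕ) (P : AddSubmonoid (Fin n → ℤ))
    (δ : Derivation K (monAlg K n P) (monAlg K n P)) (e : Fin n → ℤ) : Prop :=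
  ∀ (m : Fin n → ℤ) (hm : m ∈ P), ∃ c : K,
    ((δ (chiP K n P m hm) : monAlg K n P) : Laurent K n) = AddMonoidAlgebra.single (m + e) c

/-- The Makar-Limanov invariant of `K[P]`: intersection of kernels of all LNDs. -/
def ML (K : Type) [Field K] (n : ℕ) (P : AddSubmonoid (Fin n → ℤ)) :
    Set (monAlg K n P) :=
  {f | ∀ δ : Derivation K (monAlg K n P) (monAlg K n P), IsLND δ → δ f = 0}

/-- The homogeneous Makar-Limanov invariant: intersection of kernels of all
`M`-homogeneous LNDs. -/
def MLh (K : Type) [Field K] (n : ℕ) (P : AddSubmonoid (Fin n → ℤ)) :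
    Set (monAlg K n P) :=
  {f | ∀ δ : Derivation K (monAlg K n P) (monAlg K n P),
    IsLND δ → (∃ e : Fin n → ℤ, IsHomog K n P δ e) → δ f = 0}

/-- The Makar-Limanov--Freudenburg invariant: intersection of kernels of all
LNDs admitting a slice. -/
def MLstar (K : Type) [Field K] (n : ℕ) (P : AddSubmonoid (Fin n → ℤ)) :
    Set (monAlg K n P) :=
  {f | ∀ δ : Derivation K (monAlg K n P) (monAlg K n P), IsLND δ → HasSlice δ → δ f = 0}

/-- Intersection of kernels of all homogeneous LNDs admitting a slice. -/
def MLstarh (K : Type) [Field K] (n : ℕ) (P : AddSubmonoid (Fin n → ℤ)) :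
    Set (monAlg K n P) :=
  {f | ∀ δ : Derivation K (monAlg K n P) (monAlg K n P),
    IsLND δ → HasSlice δ → (∃ e : Fin n → ℤ, IsHomog K n P δ e) → δ f = 0}

/-! ### Cones -/

/-- Embedding `ℤⁿ → ℚⁿ`. -/
def toQ (n : ℕ) (m : Fin n → ℤ) : Fin n → ℚ := fun i => (m i : ℚ)

lemma toQ_add (n : ℕ) (a b : Fin n → ℤ) : toQ n (a + b) = toQ n a + toQ n b := by
  funext i; simp [toQ]

lemma toQ_nsmul (n : ℕ) (k : ℕ) (a : Fin n → ℤ) : toQ n (k • a) = (k : ℚ) • toQ n a := by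
  funext i; simp [toQ]

lemma toQ_inj {n : ℕ} {a b : Fin n → ℤ} (h : toQ n a = toQ n b) : a = b := by
  funext i
  have := congrFun h i
  simp only [toQ] at this
  exact_mod_cast this

/-- The natural pairing between `ℚⁿ` and its dual. -/
def pairQ (n : ℕ) (w v : Fin n → ℚ) : ℚ := ∑ i, w i * v i

/-- The natural pairing between `M = ℤⁿ` and `N = ℤⁿ`. -/
def pairZ (n : ℕ) (w v : Fin n → ℤ) : ℤ := ∑ i, w i * v i

/-- The cone `σ∨ = ℚ_{≥0}·P ⊆ ℚⁿ` generated by `P`. -/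
def coneOf (n : ℕ) (P : AddSubmonoid (Fin n → ℤ)) : Set (Fin n → ℚ) :=
  {x | ∃ c : ℚ, 0 ≤ c ∧ ∃ p ∈ P, x = c • toQ n p}

/-- The dual cone of a subset of `ℚⁿ`. -/
def dualCone (n : ℕ) (s : Set (Fin n → ℚ)) : Set (Fin n → ℚ) :=
  {v | ∀ w ∈ s, 0 ≤ pairQ n w v}

/-- The cone `σ ⊆ ℚⁿ` dual to `σ∨`. -/
def sigma (n : ℕ) (P : AddSubmonoid (Fin n → ℤ)) : Set (Fin n → ℚ) :=
  dualCone n (coneOf n P)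

/-- The ray `ℚ_{≥0}·v`. -/
def rayOf (n : ℕ) (v : Fin n → ℚ) : Set (Fin n → ℚ) :=
  {x | ∃ c : ℚ, 0 ≤ c ∧ x = c • v}

/-- A cone is pointed if it contains no line. -/
def IsPointed (n : ℕ) (s : Set (Fin n → ℚ)) : Prop :=
  ∀ x ∈ s, -x ∈ s → x = 0

/-- `v` generates an extremal ray of the cone `s`. -/
def IsExtremalGen (n : ℕ) (s : Set (Fin n → ℚ)) (v : Fin n → ℚ) : Prop :=
  v ≠ 0 ∧ v ∈ s ∧ ∀ x ∈ s, ∀ y ∈ s, x + y ∈ rayOf n v → x ∈ rayOf n v ∧ y ∈ rayOf n v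

/-- A primitive lattice vector: the gcd of its coordinates is `1`. -/
def IsPrimitive (n : ℕ) (u : Fin n → ℤ) : Prop :=
  Finset.univ.gcd u = 1

/-- `u` is the primitive lattice generator of an extremal ray of `σ`. -/
def IsExtGenOfSigma (n : ℕ) (P : AddSubmonoid (Fin n → ℤ)) (u : Fin n → ℤ) : Prop :=
  IsPrimitive n u ∧ IsExtremalGen n (sigma n P) (toQ n u)

/-- `e` is a Demazure root associated to the extremal ray of `σ` with primitive
generator `u`. -/
def IsDemazureRoot (n : ℕ) (P : AddSubmonoid (Fin n → ℤ)) (u e : Fin n → ℤ) : Prop :=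
  IsExtGenOfSigma n P u ∧ pairZ n e u = -1 ∧
    ∀ u' : Fin n → ℤ, IsExtGenOfSigma n P u' → u' ≠ u → 0 ≤ pairZ n e u'

lemma mem_coneOf_int (n : ℕ) (P : AddSubmonoid (Fin n → ℤ)) (m : Fin n → ℤ) :
    toQ n m ∈ coneOf n P ↔ ∃ k : ℕ, 0 < k ∧ k • m ∈ P := by
  constructor
  · rintro ⟨c, hc, p, hp, heq⟩
    refine ⟨c.den, c.pos, ?_⟩
    have hnum : (0:ℤ) ≤ c.num := Rat.num_nonneg.mpr hc
    have key : c.den • m = c.num.toNat • p := by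
      apply toQ_inj
      rw [toQ_nsmul, toQ_nsmul, heq, smul_smul]
      congr 1
      have hden : (c.den : ℚ) ≠ 0 := Nat.cast_ne_zero.mpr c.den_nz
      have h2 : (c.num : ℚ) = c * c.den := (div_eq_iff hden).mp (Rat.num_div_den c)
      have h1 : ((c.num.toNat : ℕ) : ℚ) = (c.num : ℚ) := by
        exact_mod_cast Int.toNat_of_nonneg hnum
      rw [h1, h2]
      ring
    rw [key]
    exact AddSubmonoid.nsmul_mem P hp _
  · rintro ⟨k, hk, hkm⟩
    refine ⟨(k : ℚ)⁻¹, by positivity, k • m, hkm, ?_⟩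
    rw [toQ_nsmul, smul_smul]
    rw [inv_mul_cancel₀ (by exact_mod_cast hk.ne')]
    rw [one_smul]

/-- The saturation `P_sat = σ∨ ∩ M` of `P`. -/
def Psat (n : ℕ) (P : AddSubmonoid (Fin n → ℤ)) : AddSubmonoid (Fin n → ℤ) where
  carrier := {m | toQ n m ∈ coneOf n P}
  zero_mem' := by
    refine ⟨0, le_refl 0, 0, P.zero_mem, ?_⟩
    funext i; simp [toQ]
  add_mem' := by
    intro a b ha hb
    rw [Set.mem_setOf_eq, mem_coneOf_int] at ha hb ⊢
    obtain ⟨k, hk, hka⟩ := ha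
    obtain ⟨l, hl, hlb⟩ := hb
    refine ⟨k * l, Nat.mul_pos hk hl, ?_⟩
    have : (k * l) • (a + b) = l • (k • a) + k • (l • b) := by
      rw [smul_add, smul_smul, smul_smul, mul_comm l k]
    rw [this]
    exact P.add_mem (AddSubmonoid.nsmul_mem P hka l) (AddSubmonoid.nsmul_mem P hlb k)

lemma le_Psat (n : ℕ) (P : AddSubmonoid (Fin n → ℤ)) : P ≤ Psat n P := by
  intro m hm
  exact ⟨1, zero_le_one, m, hm, (one_smul _ _).symm⟩

lemma monAlg_mono (K : Type) [Field K] (n : ℕ) {P Q : AddSubmonoid (Fin n → ℤ)}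
    (h : P ≤ Q) : monAlg K n P ≤ monAlg K n Q :=
  fun _ hf m hm => h (hf m hm)

/-- `p` is a saturation point of `P`: `(p + σ∨) ∩ M ⊆ P`. -/
def IsSatPoint (n : ℕ) (P : AddSubmonoid (Fin n → ℤ)) (p : Fin n → ℤ) : Prop :=
  p ∈ P ∧ ∀ q ∈ Psat n P, p + q ∈ P

/-- The facet of `σ∨` corresponding to the extremal ray of `σ` with primitive
generator `u`: `σ∨ ∩ u^⊥`. -/
def facet (n : ℕ) (P : AddSubmonoid (Fin n → ℤ)) (u : Fin n → ℤ) : Set (Fin n → ℚ) :=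
  {x | x ∈ coneOf n P ∧ pairQ n x (toQ n u) = 0}

/-- The intersection of all facets of `σ∨` other than the one corresponding to `u`. -/
def facetInter (n : ℕ) (P : AddSubmonoid (Fin n → ℤ)) (u : Fin n → ℤ) :
    Set (Fin n → ℚ) :=
  ⋂ u' ∈ {u' : Fin n → ℤ | IsExtGenOfSigma n P u' ∧ u' ≠ u}, facet n P u'

/-- The facet of `σ∨` corresponding to `u` is affine: it is saturated
(`F ∩ M ⊆ P`) and the intersection of all other facets is one-dimensional. -/
def IsAffineFacet (n : ℕ) (P : AddSubmonoid (Fin n → ℤ)) (u : Fin n → ℤ) : Prop :=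
  IsExtGenOfSigma n P u ∧
  (∀ m : Fin n → ℤ, toQ n m ∈ facet n P u → m ∈ P) ∧
  (∃ v : Fin n → ℚ, v ≠ 0 ∧ facetInter n P u = rayOf n v)

/-- The extremal ray of `σ∨` with primitive vector `r`, corresponding to the
affine facet of `u`, is affine. -/
def IsAffineRay (n : ℕ) (P : AddSubmonoid (Fin n → ℤ)) (u r : Fin n → ℤ) : Prop :=
  IsPrimitive n r ∧ IsExtremalGen n (coneOf n P) (toQ n r) ∧
  toQ n r ∉ facet n P u ∧
  r ∈ P ∧ pairZ n r u = 1 ∧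
  ∀ h : Fin n → ℤ, toQ n h ∈ facet n P u → h ∉ P →
    ∀ k : ℕ, 0 < k → h + k • r ∉ P

/-- `r` is the primitive vector of an affine ray of `σ∨`. -/
def IsAffineRayAbs (n : ℕ) (P : AddSubmonoid (Fin n → ℤ)) (r : Fin n → ℤ) : Prop :=
  ∃ u : Fin n → ℤ, IsAffineFacet n P u ∧ IsAffineRay n P u r

/-- The intersection `τ₀` of all affine facets of `σ∨`. -/
def affInter (n : ℕ) (P : AddSubmonoid (Fin n → ℤ)) : Set (Fin n → ℚ) :=
  ⋂ u ∈ {u : Fin n → ℤ | IsAffineFacet n P u}, facet n P u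

lemma pairQ_add_left (n : ℕ) (x y v : Fin n → ℚ) :
    pairQ n (x + y) v = pairQ n x v + pairQ n y v := by
  simp [pairQ, add_mul, Finset.sum_add_distrib]

/-- `ML*_h(K[P])` as a subalgebra of `K[P]`. -/
def MLstarhAlg (K : Type) [Field K] (n : ℕ) (P : AddSubmonoid (Fin n → ℤ)) :
    Subalgebra K (monAlg K n P) where
  carrier := MLstarh K n P
  mul_mem' := by
    intro a b ha hb δ h1 h2 h3
    rw [Derivation.leibniz, ha δ h1 h2 h3, hb δ h1 h2 h3, smul_zero, smul_zero, add_zero]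
  add_mem' := by
    intro a b ha hb δ h1 h2 h3
    rw [map_add, ha δ h1 h2 h3, hb δ h1 h2 h3, add_zero]
  algebraMap_mem' := by
    intro c δ _ _ _
    exact Derivation.map_algebraMap δ c

/-- The submonoid `P ∩ τ₀`, where `τ₀` is the intersection of all affine facets. -/
def PtauZero (n : ℕ) (P : AddSubmonoid (Fin n → ℤ)) : AddSubmonoid (Fin n → ℤ) where
  carrier := {m | m ∈ P ∧ toQ n m ∈ affInter n P}
  zero_mem' := by
    refine ⟨P.zero_mem, ?_⟩
    simp only [affInter, Set.mem_iInter]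
    intro u hu
    refine ⟨⟨0, le_refl 0, 0, P.zero_mem, ?_⟩, ?_⟩
    · funext i; simp [toQ]
    · simp [pairQ, toQ]
  add_mem' := by
    rintro a b ⟨haP, ha⟩ ⟨hbP, hb⟩
    refine ⟨P.add_mem haP hbP, ?_⟩
    simp only [affInter, Set.mem_iInter] at ha hb ⊢
    intro u hu
    obtain ⟨-, ha2⟩ := ha u hu
    obtain ⟨-, hb2⟩ := hb u hu
    refine ⟨⟨1, zero_le_one, a + b, P.add_mem haP hbP, (one_smul _ _).symm⟩, ?_⟩
    rw [toQ_add, pairQ_add_left, ha2, hb2, add_zero]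

section Aux

variable {K : Type} [Field K] {n : ℕ} {P : AddSubmonoid (Fin n → ℤ)}

lemma pz_add_left (a b u : Fin n → ℤ) :
    pairZ n (a + b) u = pairZ n a u + pairZ n b u := by
  simp [pairZ, add_mul, Finset.sum_add_distrib]

lemma pz_add_right (m a b : Fin n → ℤ) :
    pairZ n m (a + b) = pairZ n m a + pairZ n m b := by
  simp [pairZ, mul_add, Finset.sum_add_distrib]

lemma pz_nsmul_left (m u : Fin n → ℤ) (c : ℕ) :
    pairZ n (c • m) u = (c : ℤ) * pairZ n m u := by
  simp [pairZ, Finset.mul_sum, mul_assoc]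

lemma pz_zsmul_right (m a : Fin n → ℤ) (c : ℤ) :
    pairZ n m (c • a) = c * pairZ n m a := by
  simp [pairZ, Finset.mul_sum]; apply Finset.sum_congr rfl; intros; ring

lemma pq_toQ (a b : Fin n → ℤ) :
    pairQ n (toQ n a) (toQ n b) = ((pairZ n a b : ℤ) : ℚ) := by
  simp [pairQ, pairZ, toQ]

lemma pq_smul_left (w v : Fin n → ℚ) (c : ℚ) :
    pairQ n (c • w) v = c * pairQ n w v := by
  simp [pairQ, Finset.mul_sum, mul_assoc]

lemma pq_smul_right (w v : Fin n → ℚ) (c : ℚ) :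
    pairQ n w (c • v) = c * pairQ n w v := by
  simp [pairQ, Finset.mul_sum]; apply Finset.sum_congr rfl; intros; ring

lemma pq_add_right (w a b : Fin n → ℚ) :
    pairQ n w (a + b) = pairQ n w a + pairQ n w b := by
  simp [pairQ, mul_add, Finset.sum_add_distrib]

lemma pq_sub_right (w a b : Fin n → ℚ) :
    pairQ n w (a - b) = pairQ n w a - pairQ n w b := by
  simp [pairQ, mul_sub, Finset.sum_sub_distrib]

lemma toQ_zero : toQ n (0 : Fin n → ℤ) = 0 := by funext i; simp [toQ]

lemma toQ_neg (a : Fin n → ℤ) : toQ n (-a) = -toQ n a := by funext i; simp [toQ]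

lemma pq_single (i : Fin n) (x : Fin n → ℚ) :
    pairQ n (toQ n (Pi.single i 1)) x = x i := by
  simp [pairQ, toQ, Pi.single_apply]

lemma mem_Psat_iff (m : Fin n → ℤ) : m ∈ Psat n P ↔ toQ n m ∈ coneOf n P :=
  Iff.rfl

lemma toQ_mem_coneOf {m : Fin n → ℤ} (hm : m ∈ P) : toQ n m ∈ coneOf n P :=
  ⟨1, zero_le_one, m, hm, (one_smul _ _).symm⟩

lemma sigma_pairZ_nonneg {m v : Fin n → ℤ} (hm : m ∈ Psat n P)
    (hv : toQ n v ∈ sigma n P) : 0 ≤ pairZ n m v := by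
  have h := hv _ ((mem_Psat_iff m).mp hm)
  rw [pq_toQ] at h
  exact_mod_cast h

lemma toQ_mem_sigma_of_pairZ {v : Fin n → ℤ}
    (h : ∀ p ∈ P, 0 ≤ pairZ n p v) : toQ n v ∈ sigma n P := by
  rintro w ⟨c, hc, p, hp, rfl⟩
  rw [pq_smul_left, pq_toQ]
  have := h p hp
  positivity

lemma sigma_smul_mem {z : Fin n → ℚ} (hz : z ∈ sigma n P) {c : ℚ} (hc : 0 ≤ c) :
    c • z ∈ sigma n P := by
  intro w hw
  rw [pq_smul_right]
  exact mul_nonneg hc (hz w hw)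

/-- The span lemma: if a vector pairs to zero with everything in `P`, and `P`
generates `ℤⁿ` as a group, then the vector is zero. -/
lemma eq_zero_of_pairQ_zero (hgen : AddSubgroup.closure (P : Set (Fin n → ℤ)) = ⊤)
    (x : Fin n → ℚ) (h : ∀ p ∈ P, pairQ n (toQ n p) x = 0) : x = 0 := by
  let S : AddSubgroup (Fin n → ℤ) :=
    { carrier := {m | pairQ n (toQ n m) x = 0}
      zero_mem' := by simp [toQ_zero, pairQ]
      add_mem' := by
        intro a b ha hb
        simp only [Set.mem_setOf_eq] at *
        rw [toQ_add, pairQ_add_left, ha, hb, add_zero]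
      neg_mem' := by
        intro a ha
        simp only [Set.mem_setOf_eq] at *
        rw [toQ_neg]
        have hneg : pairQ n (-(toQ n a)) x = -pairQ n (toQ n a) x := by
          simp [pairQ]
        rw [hneg, ha, neg_zero] }
  have hS : ∀ m : Fin n → ℤ, pairQ n (toQ n m) x = 0 := by
    intro m
    have : m ∈ S := by
      have : AddSubgroup.closure (P : Set (Fin n → ℤ)) ≤ S :=
        AddSubgroup.closure_le S |>.mpr (fun p hp => h p hp)
      exact this (by rw [hgen]; trivial)
    exact this
  funext i
  have := hS (Pi.single i 1)
  rwa [pq_single] at this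

/-- Every element of `ℤⁿ` is a difference of elements of `P`. -/
lemma exists_decomp (hgen : AddSubgroup.closure (P : Set (Fin n → ℤ)) = ⊤)
    (m : Fin n → ℤ) : ∃ p, p ∈ P ∧ ∃ q, q ∈ P ∧ m = p - q := by
  let S : AddSubgroup (Fin n → ℤ) :=
    { carrier := {m | ∃ p, p ∈ P ∧ ∃ q, q ∈ P ∧ m = p - q}
      zero_mem' := ⟨0, P.zero_mem, 0, P.zero_mem, by simp⟩
      add_mem' := by
        rintro a b ⟨p, hp, q, hq, rfl⟩ ⟨p', hp', q', hq', rfl⟩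
        exact ⟨p + p', P.add_mem hp hp', q + q', P.add_mem hq hq', by abel⟩
      neg_mem' := by
        rintro a ⟨p, hp, q, hq, rfl⟩
        exact ⟨q, hq, p, hp, by abel⟩ }
  have : m ∈ S := by
    have hle : AddSubgroup.closure (P : Set (Fin n → ℤ)) ≤ S :=
      AddSubgroup.closure_le S |>.mpr (fun p hp => ⟨p, hp, 0, P.zero_mem, by simp⟩)
    exact hle (by rw [hgen]; trivial)
  exact this

/-- Two positively proportional primitive integer vectors are equal. -/
lemma prim_eq_of_ray {u u' : Fin n → ℤ} (hu : IsPrimitive n u) (hu' : IsPrimitive n u')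
    {t : ℚ} (ht : 0 < t) (h : toQ n u = t • toQ n u') : u = u' := by
  have hb : (0:ℤ) < (t.den : ℤ) := by exact_mod_cast t.pos
  have ha : (0:ℤ) < t.num := Rat.num_pos.mpr ht
  have key : ∀ i, (t.den : ℤ) * u i = t.num * u' i := by
    intro i
    have hi : (u i : ℚ) = t * u' i := by
      have := congrFun h i
      simpa [toQ] using this
    have hden : ((t.den : ℤ) : ℚ) ≠ 0 := by
      exact_mod_cast t.den_nz
    have hnd : (t.num : ℚ) = t * t.den := (div_eq_iff (by exact_mod_cast t.den_nz)).mp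
      (Rat.num_div_den t)
    have : ((t.den : ℤ) : ℚ) * (u i : ℚ) = (t.num : ℚ) * (u' i : ℚ) := by
      rw [hi, hnd]
      push_cast
      ring
    exact_mod_cast this
  have hg1 : Finset.univ.gcd (fun i => (t.den : ℤ) * u i) = (t.den : ℤ) := by
    rw [Finset.gcd_mul_left, hu, mul_one, Int.normalize_of_nonneg hb.le]
  have hg2 : Finset.univ.gcd (fun i => t.num * u' i) = t.num := by
    rw [Finset.gcd_mul_left, hu', mul_one, Int.normalize_of_nonneg ha.le]
  have hab : (t.den : ℤ) = t.num := by
    rw [← hg1, ← hg2]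
    congr 1
    funext i
    exact key i
  have ht1 : t = 1 := by
    have := Rat.num_div_den t
    rw [← hab] at this
    push_cast at this
    rw [div_self (by exact_mod_cast t.den_nz)] at this
    exact this.symm
  rw [ht1, one_smul] at h
  exact toQ_inj h

end Aux
section Der

variable {K : Type} [Field K] {n : ℕ} {Q : AddSubmonoid (Fin n → ℤ)}

lemma chiP_coe (m : Fin n → ℤ) (hm : m ∈ Q) :
    ((chiP K n Q m hm : monAlg K n Q) : Laurent K n) = AddMonoidAlgebra.single m 1 := rfl

lemma chiP_ne_zero (m : Fin n → ℤ) (hm : m ∈ Q) : chiP K n Q m hm ≠ 0 := by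
  intro h
  have : (AddMonoidAlgebra.single m 1 : Laurent K n) = 0 := by
    rw [← chiP_coe m hm, h]; rfl
  exact one_ne_zero (AddMonoidAlgebra.single_eq_zero.mp this)

lemma chiP_mul (m m' : Fin n → ℤ) (hm : m ∈ Q) (hm' : m' ∈ Q) :
    chiP K n Q m hm * chiP K n Q m' hm' = chiP K n Q (m + m') (Q.add_mem hm hm') := by
  apply Subtype.ext
  rw [MulMemClass.coe_mul, chiP_coe, chiP_coe, chiP_coe]
  rw [AddMonoidAlgebra.single_mul_single, mul_one]

lemma mem_of_mem_support (f : monAlg K n Q) {m : Fin n → ℤ}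
    (h : m ∈ (f : Laurent K n).coeff.support) : m ∈ Q := f.2 m h

lemma repr_eq (f : monAlg K n Q) :
    f = ∑ m ∈ (f : Laurent K n).coeff.support.attach,
      ((f : Laurent K n).coeff m.1) • chiP K n Q m.1 (mem_of_mem_support f m.2) := by
  apply Subtype.ext
  rw [AddSubmonoidClass.coe_finset_sum]
  have : ∀ m : {x // x ∈ (f : Laurent K n).coeff.support},
      ((((f : Laurent K n).coeff m.1) • chiP K n Q m.1 (mem_of_mem_support f m.2) :
        monAlg K n Q) : Laurent K n)
      = AddMonoidAlgebra.single m.1 ((f : Laurent K n).coeff m.1) := by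
    intro m
    rw [SetLike.val_smul, chiP_coe, AddMonoidAlgebra.smul_single, smul_eq_mul, mul_one]
  rw [Finset.sum_congr rfl (fun m _ => this m)]
  rw [Finset.sum_attach _ (fun m => AddMonoidAlgebra.single m ((f : Laurent K n).coeff m))]
  exact (AddMonoidAlgebra.sum_coeff_single (f : Laurent K n)).symm

variable (D : Derivation K (monAlg K n Q) (monAlg K n Q)) (e : Fin n → ℤ)

/-- The coefficient `λ(m)` with `∂(χ^m) = λ(m) χ^{m+e}`. -/
def coefD (m : Fin n → ℤ) (hm : m ∈ Q) : K :=
  ((D (chiP K n Q m hm) : monAlg K n Q) : Laurent K n).coeff (m + e)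

variable (hom : IsHomog K n Q D e)

include hom

lemma coefD_spec (m : Fin n → ℤ) (hm : m ∈ Q) :
    ((D (chiP K n Q m hm) : monAlg K n Q) : Laurent K n)
      = AddMonoidAlgebra.single (m + e) (coefD D e m hm) := by
  obtain ⟨c, hc⟩ := hom m hm
  rw [coefD, hc, AddMonoidAlgebra.coeff_single, Finsupp.single_eq_same]

lemma D_chiP_of_zero (m : Fin n → ℤ) (hm : m ∈ Q) (h : coefD D e m hm = 0) :
    D (chiP K n Q m hm) = 0 := by
  apply Subtype.ext
  rw [coefD_spec D e hom m hm, h, AddMonoidAlgebra.single_zero]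
  rfl

lemma coefD_mem (m : Fin n → ℤ) (hm : m ∈ Q) (h : coefD D e m hm ≠ 0) :
    m + e ∈ Q := by
  apply mem_of_mem_support (D (chiP K n Q m hm))
  rw [Finsupp.mem_support_iff, coefD_spec D e hom m hm, AddMonoidAlgebra.coeff_single,
    Finsupp.single_eq_same]
  exact h

lemma D_chiP_of_mem (m : Fin n → ℤ) (hm : m ∈ Q) (h : m + e ∈ Q) :
    D (chiP K n Q m hm) = coefD D e m hm • chiP K n Q (m + e) h := by
  apply Subtype.ext
  rw [coefD_spec D e hom m hm, SetLike.val_smul, chiP_coe, AddMonoidAlgebra.smul_single,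
    smul_eq_mul, mul_one]

lemma coefD_add (m m' : Fin n → ℤ) (hm : m ∈ Q) (hm' : m' ∈ Q) :
    coefD D e (m + m') (Q.add_mem hm hm') = coefD D e m hm + coefD D e m' hm' := by
  have hmul := chiP_mul (K := K) m m' hm hm'
  have hD : D (chiP K n Q m hm * chiP K n Q m' hm')
      = chiP K n Q m hm • D (chiP K n Q m' hm')
        + chiP K n Q m' hm' • D (chiP K n Q m hm) := D.leibniz _ _
  rw [hmul] at hD
  have hcoe := congrArg (fun x : monAlg K n Q => (x : Laurent K n)) hD
  simp only [Subalgebra.coe_add] at hcoe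
  rw [coefD_spec D e hom (m + m') (Q.add_mem hm hm')] at hcoe
  have h1 : ((chiP K n Q m hm • D (chiP K n Q m' hm') : monAlg K n Q) : Laurent K n)
      = AddMonoidAlgebra.single (m + (m' + e)) (coefD D e m' hm') := by
    rw [smul_eq_mul, MulMemClass.coe_mul, chiP_coe, coefD_spec D e hom m' hm',
      AddMonoidAlgebra.single_mul_single, one_mul]
  have h2 : ((chiP K n Q m' hm' • D (chiP K n Q m hm) : monAlg K n Q) : Laurent K n)
      = AddMonoidAlgebra.single (m' + (m + e)) (coefD D e m hm) := by
    rw [smul_eq_mul, MulMemClass.coe_mul, chiP_coe, coefD_spec D e hom m hm,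
      AddMonoidAlgebra.single_mul_single, one_mul]
  rw [h1, h2] at hcoe
  have heq1 : m + (m' + e) = m + m' + e := by abel
  have heq2 : m' + (m + e) = m + m' + e := by abel
  rw [heq1, heq2] at hcoe
  rw [← AddMonoidAlgebra.single_add] at hcoe
  have := AddMonoidAlgebra.single_right_injective hcoe
  rw [this, add_comm]

/-- If all coefficients vanish, the derivation is zero. -/
lemma D_eq_zero (hz : ∀ (m : Fin n → ℤ) (hm : m ∈ Q), coefD D e m hm = 0) :
    D = 0 := by
  ext f
  rw [repr_eq f, map_sum]
  rw [Finset.sum_congr rfl (fun m _ => D.map_smul ((f : Laurent K n).coeff m.1) _)]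
  rw [Finset.sum_congr rfl (fun m _ => by
    rw [D_chiP_of_zero D e hom _ _ (hz m.1 (mem_of_mem_support f m.2)), smul_zero])]
  simp

/-- The chain lemma: local nilpotency at `χ^m` forces a vanishing coefficient
along the `e`-orbit of `m`. -/
lemma chain_lemma : ∀ (k : ℕ) (m : Fin n → ℤ) (hm : m ∈ Q),
    (D.toLinearMap ^ k) (chiP K n Q m hm) = 0 →
    ∃ (j : ℕ) (h : m + j • e ∈ Q), coefD D e (m + j • e) h = 0 := by
  intro k
  induction k with
  | zero =>
    intro m hm h0
    rw [pow_zero, Module.End.one_apply] at h0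
    exact absurd h0 (chiP_ne_zero m hm)
  | succ k ih =>
    intro m hm h0
    by_cases hc : coefD D e m hm = 0
    · refine ⟨0, ?_, ?_⟩
      · rwa [zero_smul, add_zero]
      · convert hc using 2 <;> rw [zero_smul, add_zero]

    · have hmem : m + e ∈ Q := coefD_mem D e hom m hm hc
      rw [pow_succ, Module.End.mul_apply] at h0
      rw [show D.toLinearMap (chiP K n Q m hm) = D (chiP K n Q m hm) from rfl,
        D_chiP_of_mem D e hom m hm hmem, map_smul] at h0
      have h0' : (D.toLinearMap ^ k) (chiP K n Q (m + e) hmem) = 0 := by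
        rcases smul_eq_zero.mp h0 with h | h
        · exact absurd h hc
        · exact h
      obtain ⟨j, h, hj⟩ := ih (m + e) hmem h0'
      have heq : m + e + j • e = m + (j + 1) • e := by
        rw [succ_nsmul]; abel
      exact ⟨j + 1, heq ▸ h, by
        have := hj
        rw [show coefD D e (m + e + j • e) h = coefD D e (m + (j+1) • e) (heq ▸ h) by
          congr 1] at this
        exact this⟩

end Der
section Ext

variable {K : Type} [Field K] {n : ℕ} {Q : AddSubmonoid (Fin n → ℤ)}

lemma exists_extension (hgen : AddSubgroup.closure (Q : Set (Fin n → ℤ)) = ⊤)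
    (g : (Fin n → ℤ) → K)
    (hadd : ∀ m ∈ Q, ∀ m' ∈ Q, g (m + m') = g m + g m') :
    ∃ Λ : (Fin n → ℤ) →+ K, ∀ m ∈ Q, Λ m = g m := by
  have hdec := exists_decomp hgen
  choose p hp q hq hpq using hdec
  have hg0 : g 0 = 0 := by
    have h := hadd 0 Q.zero_mem 0 Q.zero_mem
    rw [add_zero] at h
    exact (left_eq_add.mp h)
  have hcross : ∀ a b c d : Fin n → ℤ, a ∈ Q → b ∈ Q → c ∈ Q → d ∈ Q →
      a - b = c - d → g a + g d = g c + g b := by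
    intro a b c d ha hb hc hd habcd
    have hsum : a + d = c + b := sub_eq_sub_iff_add_eq_add.mp habcd
    calc g a + g d = g (a + d) := (hadd a ha d hd).symm
      _ = g (c + b) := by rw [hsum]
      _ = g c + g b := hadd c hc b hb
  refine ⟨AddMonoidHom.mk' (fun m => g (p m) - g (q m)) ?_, ?_⟩
  · intro a b
    have h1 : p (a + b) - q (a + b) = (p a + p b) - (q a + q b) := by
      rw [← hpq (a + b)]
      conv_lhs => rw [hpq a, hpq b]
      abel
    have h2 := hcross _ _ _ _ (hp (a + b)) (hq (a + b))
      (Q.add_mem (hp a) (hp b)) (Q.add_mem (hq a) (hq b)) h1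
    rw [hadd (p a) (hp a) (p b) (hp b), hadd (q a) (hq a) (q b) (hq b)] at h2
    linear_combination h2
  · intro m hm
    have h1 : p m - q m = m - 0 := by rw [← hpq m, sub_zero]
    have h2 := hcross _ _ _ _ (hp m) (hq m) hm Q.zero_mem h1
    simp only [AddMonoidHom.mk'_apply]
    rw [hg0] at h2
    linear_combination h2

end Ext

section Rev

variable {K : Type} [Field K] [CharZero K] {n : ℕ} {P : AddSubmonoid (Fin n → ℤ)}

lemma reverse_dir (D : Derivation K (monAlg K n (Psat n P)) (monAlg K n (Psat n P)))
    (u e : Fin n → ℤ) (lam : K) (hlam : lam ≠ 0)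
    (hu : toQ n u ∈ sigma n P) (he : pairZ n e u = -1)
    (hform : ∀ (m : Fin n → ℤ) (hm : m ∈ Psat n P),
      ((D (chiP K n (Psat n P) m hm) : monAlg K n (Psat n P)) : Laurent K n)
        = AddMonoidAlgebra.single (m + e) (lam * ((pairZ n m u : ℤ) : K))) :
    IsLND D := by
  have hnn : ∀ m ∈ Psat n P, 0 ≤ pairZ n m u := fun m hm => sigma_pairZ_nonneg hm hu
  have hcoef : ∀ (m : Fin n → ℤ) (hm : m ∈ Psat n P),
      coefD D e m hm = lam * ((pairZ n m u : ℤ) : K) := by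
    intro m hm
    rw [coefD, hform m hm, AddMonoidAlgebra.coeff_single, Finsupp.single_eq_same]
  have hom' : IsHomog K n (Psat n P) D e := fun m hm => ⟨_, hform m hm⟩
  have key : ∀ (d : ℕ) (m : Fin n → ℤ) (hm : m ∈ Psat n P), pairZ n m u ≤ d →
      (D.toLinearMap ^ (d + 1)) (chiP K n (Psat n P) m hm) = 0 := by
    intro d
    induction d with
    | zero =>
      intro m hm hle
      have h0 : pairZ n m u = 0 := le_antisymm hle (hnn m hm)
      rw [pow_one]
      show D (chiP K n (Psat n P) m hm) = 0
      apply D_chiP_of_zero D e hom'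
      rw [hcoef m hm, h0]
      simp
    | succ d ih =>
      intro m hm hle
      by_cases hd : pairZ n m u ≤ d
      · rw [pow_succ', Module.End.mul_apply, ih m hm hd, map_zero]
      · have hdm : pairZ n m u = (d : ℤ) + 1 := by omega
        have hcne : coefD D e m hm ≠ 0 := by
          rw [hcoef m hm, hdm]
          refine mul_ne_zero hlam ?_
          exact_mod_cast (by omega : ((d : ℤ) + 1) ≠ 0)
        have hmem := coefD_mem D e hom' m hm hcne
        have hpair : pairZ n (m + e) u ≤ d := by rw [pz_add_left, he]; omega
        rw [pow_succ, Module.End.mul_apply]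
        rw [show D.toLinearMap (chiP K n (Psat n P) m hm) = D (chiP K n (Psat n P) m hm) from rfl,
          D_chiP_of_mem D e hom' m hm hmem, map_smul, ih (m + e) hmem hpair, smul_zero]
  intro f
  obtain ⟨S, hS⟩ : ∃ S, S = (f : Laurent K n).coeff.support.sup
      (fun m => (pairZ n m u).toNat) := ⟨_, rfl⟩
  refine ⟨S + 1, ?_⟩
  rw [repr_eq f, map_sum]
  apply Finset.sum_eq_zero
  intro m _
  rw [map_smul, key S m.1 (mem_of_mem_support f m.2) ?_, smul_zero]
  have hle : (pairZ n m.1 u).toNat ≤ (f : Laurent K n).coeff.support.sup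
      (fun m => (pairZ n m u).toNat) :=
    Finset.le_sup (f := fun m => (pairZ n m u).toNat) m.2
  omega

end Rev
section Fwd

variable {K : Type} [Field K] [CharZero K] {n : ℕ} {P : AddSubmonoid (Fin n → ℤ)}

lemma forward_dir (hgen : AddSubgroup.closure (P : Set (Fin n → ℤ)) = ⊤)
    (D : Derivation K (monAlg K n (Psat n P)) (monAlg K n (Psat n P)))
    (hD : D ≠ 0) (e : Fin n → ℤ) (hom : IsHomog K n (Psat n P) D e)
    (hLND : IsLND D) :
    ∃ (u : Fin n → ℤ) (lam : K), IsDemazureRoot n P u e ∧ lam ≠ 0 ∧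
      ∀ (m : Fin n → ℤ) (hm : m ∈ Psat n P),
        ((D (chiP K n (Psat n P) m hm) : monAlg K n (Psat n P)) : Laurent K n)
          = AddMonoidAlgebra.single (m + e) (lam * ((pairZ n m u : ℤ) : K)) := by
  classical
  set g : (Fin n → ℤ) → K :=
    fun m => if hm : m ∈ Psat n P then coefD D e m hm else 0 with hgdef
  have hgQ : ∀ (m : Fin n → ℤ) (hm : m ∈ Psat n P), g m = coefD D e m hm :=
    fun m hm => dif_pos hm
  have hgadd : ∀ m ∈ Psat n P, ∀ m' ∈ Psat n P, g (m + m') = g m + g m' := by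
    intro m hm m' hm'
    rw [hgQ m hm, hgQ m' hm', hgQ _ ((Psat n P).add_mem hm hm')]
    exact coefD_add D e hom m m' hm hm'
  have hgenQ : AddSubgroup.closure ((Psat n P : Set (Fin n → ℤ))) = ⊤ := by
    apply top_unique
    rw [← hgen]
    exact AddSubgroup.closure_mono (fun x hx => le_Psat n P hx)
  obtain ⟨Λ, hΛ⟩ := exists_extension hgenQ g hgadd
  have hΛQ : ∀ (m : Fin n → ℤ) (hm : m ∈ Psat n P), Λ m = coefD D e m hm :=
    fun m hm => (hΛ m hm).trans (hgQ m hm)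
  have hex : ∃ (m₀ : Fin n → ℤ) (hm₀ : m₀ ∈ Psat n P), coefD D e m₀ hm₀ ≠ 0 := by
    by_contra h
    push_neg at h
    exact hD (D_eq_zero D e hom (fun m hm => h m hm))
  obtain ⟨m₀, hm₀, hc₀⟩ := hex
  have hΛe : Λ e ≠ 0 := by
    intro h0
    have hmem : ∀ j : ℕ, m₀ + j • e ∈ Psat n P := by
      intro j
      induction j with
      | zero => simpa using hm₀
      | succ j ih =>
        have hne : coefD D e (m₀ + j • e) ih ≠ 0 := by
          rw [← hΛQ _ ih, map_add, AddMonoidHom.map_nsmul, h0, smul_zero, add_zero,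
            hΛQ m₀ hm₀]
          exact hc₀
        have hmm := coefD_mem D e hom _ ih hne
        have heq : m₀ + j • e + e = m₀ + (j + 1) • e := by rw [succ_nsmul]; abel
        rwa [heq] at hmm
    obtain ⟨k, hk⟩ := hLND (chiP K n (Psat n P) m₀ hm₀)
    obtain ⟨j, hj, hzero⟩ := chain_lemma D e hom k m₀ hm₀ hk
    have hne : coefD D e (m₀ + j • e) hj ≠ 0 := by
      rw [← hΛQ _ hj, map_add, AddMonoidHom.map_nsmul, h0, smul_zero, add_zero,
        hΛQ m₀ hm₀]
      exact hc₀
    exact hne hzero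
  set ν : K := -Λ e with hν
  have hνne : ν ≠ 0 := neg_ne_zero.mpr hΛe
  have hnat : ∀ (m : Fin n → ℤ) (hm : m ∈ Psat n P), ∃ d : ℕ, Λ m = (d : K) * ν := by
    intro m hm
    obtain ⟨k, hk⟩ := hLND (chiP K n (Psat n P) m hm)
    have hexj : ∃ j : ℕ, ∃ h : m + j • e ∈ Psat n P, coefD D e (m + j • e) h = 0 :=
      chain_lemma D e hom k m hm hk
    let j₀ := Nat.find hexj
    have hj₀ : ∃ h : m + j₀ • e ∈ Psat n P, coefD D e (m + j₀ • e) h = 0 :=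
      Nat.find_spec hexj
    have hmin : ∀ i < j₀, ¬ ∃ h : m + i • e ∈ Psat n P, coefD D e (m + i • e) h = 0 :=
      fun i hi => Nat.find_min hexj hi
    have hmemchain : ∀ i, i ≤ j₀ → m + i • e ∈ Psat n P := by
      intro i
      induction i with
      | zero => intro _; simpa using hm
      | succ i ih =>
        intro hi
        have hi' : i ≤ j₀ := Nat.le_of_succ_le hi
        have hmemi := ih hi'
        have hne : coefD D e (m + i • e) hmemi ≠ 0 := by
          intro hzz
          exact hmin i (Nat.lt_of_succ_le hi) ⟨hmemi, hzz⟩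
        have hmm := coefD_mem D e hom _ hmemi hne
        have heq : m + i • e + e = m + (i + 1) • e := by rw [succ_nsmul]; abel
        rwa [heq] at hmm
    obtain ⟨hjmem, hjzero⟩ := hj₀
    refine ⟨j₀, ?_⟩
    have hzv : Λ (m + j₀ • e) = 0 := by rw [hΛQ _ hjmem, hjzero]
    rw [map_add, AddMonoidHom.map_nsmul] at hzv
    have hns : (j₀ : ℕ) • Λ e = (j₀ : K) * Λ e := nsmul_eq_mul _ _
    rw [hns] at hzv
    rw [hν]
    linear_combination hzv
  have hint : ∀ m : Fin n → ℤ, ∃ z : ℤ, Λ m = (z : K) * ν := by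
    intro m
    obtain ⟨p, hp, q, hq, rfl⟩ := exists_decomp hgen m
    obtain ⟨dp, hdp⟩ := hnat p (le_Psat n P hp)
    obtain ⟨dq, hdq⟩ := hnat q (le_Psat n P hq)
    refine ⟨(dp : ℤ) - (dq : ℤ), ?_⟩
    rw [map_sub, hdp, hdq]
    push_cast
    ring
  choose zfun hzfun using hint
  set u : Fin n → ℤ := fun i => zfun (Pi.single i 1) with hu
  have hsingle_smul : ∀ (i : Fin n) (c : ℤ),
      (Pi.single i c : Fin n → ℤ) = c • (Pi.single i 1 : Fin n → ℤ) := by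
    intro i c
    funext j
    by_cases h : j = i
    · subst h; simp
    · simp [Pi.single_eq_of_ne h]
  have hΛpair : ∀ m : Fin n → ℤ, Λ m = ((pairZ n m u : ℤ) : K) * ν := by
    intro m
    have hm : m = ∑ i, Pi.single i (m i) := (Finset.univ_sum_single m).symm
    calc Λ m = Λ (∑ i, Pi.single i (m i)) := by rw [← hm]
      _ = ∑ i, Λ (Pi.single i (m i)) := map_sum Λ _ _
      _ = ∑ i, ((m i * u i : ℤ) : K) * ν := by
          apply Finset.sum_congr rfl; intro i _
          rw [hsingle_smul i (m i), map_zsmul, hzfun (Pi.single i 1)]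
          rw [zsmul_eq_mul]
          push_cast
          ring
      _ = ((pairZ n m u : ℤ) : K) * ν := by
          rw [pairZ]
          push_cast
          rw [Finset.sum_mul]
  have heu : pairZ n e u = -1 := by
    have h1 : ((pairZ n e u : ℤ) : K) * ν = ((-1 : ℤ) : K) * ν := by
      rw [← hΛpair e, hν]
      push_cast
      ring
    have h2 := mul_right_cancel₀ hνne h1
    exact_mod_cast h2
  have hQnn : ∀ m ∈ Psat n P, 0 ≤ pairZ n m u := by
    intro m hm
    obtain ⟨d, hd⟩ := hnat m hm
    have h1 : ((pairZ n m u : ℤ) : K) * ν = ((d : ℤ) : K) * ν := by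
      rw [← hΛpair m, hd]
      push_cast
      ring
    have h2 := mul_right_cancel₀ hνne h1
    have h3 : pairZ n m u = (d : ℤ) := by exact_mod_cast h2
    omega
  have hcoef : ∀ (m : Fin n → ℤ) (hm : m ∈ Psat n P),
      coefD D e m hm = ν * ((pairZ n m u : ℤ) : K) := by
    intro m hm
    rw [← hΛQ m hm, hΛpair m, mul_comm]
  have hshift1 : ∀ (m : Fin n → ℤ) (hm : m ∈ Psat n P),
      1 ≤ pairZ n m u → m + e ∈ Psat n P := by
    intro m hm h1
    apply coefD_mem D e hom m hm
    rw [hcoef m hm]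
    apply mul_ne_zero hνne
    exact_mod_cast (by omega : pairZ n m u ≠ 0)
  have hshiftk : ∀ (d : ℕ) (m : Fin n → ℤ) (hm : m ∈ Psat n P),
      pairZ n m u = d → m + d • e ∈ Psat n P := by
    intro d
    induction d with
    | zero => intro m hm _; simpa using hm
    | succ d ih =>
      intro m hm h
      have h1 : m + e ∈ Psat n P := hshift1 m hm (by omega)
      have h2 : pairZ n (m + e) u = d := by rw [pz_add_left, heu, h]; push_cast; ring
      have h3 := ih (m + e) h1 h2
      have heq : m + e + d • e = m + (d + 1) • e := by rw [succ_nsmul]; abel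
      rwa [heq] at h3
  have hune : u ≠ 0 := by
    intro h
    rw [h] at heu
    simp [pairZ] at heu
  have htoQune : toQ n u ≠ 0 := by
    intro h
    exact hune (toQ_inj (by rw [h, toQ_zero]))
  have husig : toQ n u ∈ sigma n P :=
    toQ_mem_sigma_of_pairZ (fun p hp => hQnn p (le_Psat n P hp))
  have hkey : ∀ z ∈ sigma n P,
      (∀ m ∈ Psat n P, pairZ n m u = 0 → pairQ n (toQ n m) z = 0) →
      z ∈ rayOf n (toQ n u) := by
    intro z hz h0
    set a : ℚ := -pairQ n (toQ n e) z with ha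
    have hval : ∀ m ∈ Psat n P,
        pairQ n (toQ n m) z = a * ((pairZ n m u : ℤ) : ℚ) := by
      intro m hm
      have hd0 : 0 ≤ pairZ n m u := hQnn m hm
      set d : ℕ := (pairZ n m u).toNat with hd
      have hdval : pairZ n m u = (d : ℤ) := by omega
      have hmem : m + d • e ∈ Psat n P := hshiftk d m hm hdval
      have hp0 : pairZ n (m + d • e) u = 0 := by
        rw [pz_add_left, pz_nsmul_left, heu, hdval]; ring
      have hz0 := h0 _ hmem hp0
      rw [toQ_add, pairQ_add_left, toQ_nsmul, pq_smul_left] at hz0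
      rw [hdval, ha]
      push_cast
      linarith [hz0]
    have hzz : z = a • toQ n u := by
      have hsub : z - a • toQ n u = 0 := by
        apply eq_zero_of_pairQ_zero hgen
        intro p hp
        rw [pq_sub_right, pq_smul_right, pq_toQ, hval p (le_Psat n P hp)]
        ring
      exact sub_eq_zero.mp hsub
    have hexp : ∃ p ∈ P, pairZ n p u ≠ 0 := by
      by_contra hcon
      push_neg at hcon
      apply htoQune
      apply eq_zero_of_pairQ_zero hgen
      intro p hp
      rw [pq_toQ, hcon p hp]
      norm_num
    obtain ⟨p, hp, hpne⟩ := hexp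
    have hppos : 0 < pairZ n p u := lt_of_le_of_ne (hQnn p (le_Psat n P hp)) (Ne.symm hpne)
    have hppq : 0 ≤ pairQ n (toQ n p) z := hz _ (toQ_mem_coneOf hp)
    rw [hval p (le_Psat n P hp)] at hppq
    have ha0 : 0 ≤ a := by
      by_contra hneg
      push_neg at hneg
      have hlt : a * ((pairZ n p u : ℤ) : ℚ) < 0 :=
        mul_neg_of_neg_of_pos hneg (by exact_mod_cast hppos)
      linarith
    exact ⟨a, ha0, hzz⟩
  have hext : IsExtremalGen n (sigma n P) (toQ n u) := by
    refine ⟨htoQune, husig, ?_⟩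
    rintro x hx y hy ⟨c, hc, hxy⟩
    have h0 : ∀ m ∈ Psat n P, pairZ n m u = 0 →
        pairQ n (toQ n m) x = 0 ∧ pairQ n (toQ n m) y = 0 := by
      intro m hm hmu
      have hxnn : 0 ≤ pairQ n (toQ n m) x := hx _ ((mem_Psat_iff m).mp hm)
      have hynn : 0 ≤ pairQ n (toQ n m) y := hy _ ((mem_Psat_iff m).mp hm)
      have hsum : pairQ n (toQ n m) x + pairQ n (toQ n m) y = 0 := by
        rw [← pq_add_right, hxy, pq_smul_right, pq_toQ, hmu]
        norm_num
      constructor <;> linarith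
    exact ⟨hkey x hx (fun m hm hmu => (h0 m hm hmu).1),
           hkey y hy (fun m hm hmu => (h0 m hm hmu).2)⟩
  have hprim : IsPrimitive n u := by
    have hdvd : Finset.univ.gcd u ∣ pairZ n e u := by
      apply Finset.dvd_sum
      intro i _
      exact Dvd.dvd.mul_left (Finset.gcd_dvd (Finset.mem_univ i)) _
    rw [heu] at hdvd
    have hgnn : 0 ≤ Finset.univ.gcd u :=
      Int.nonneg_of_normalize_eq_self Finset.normalize_gcd
    exact Int.eq_one_of_dvd_one hgnn (dvd_neg.mp hdvd)
  have hroot3 : ∀ u' : Fin n → ℤ, IsExtGenOfSigma n P u' → u' ≠ u → 0 ≤ pairZ n e u' := by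
    intro u' hu' hne
    by_contra hneg
    push_neg at hneg
    set β : ℤ := pairZ n e u' with hβ
    have hβ1 : β ≤ -1 := by omega
    have hw : ∀ m ∈ P, 0 ≤ pairZ n m (u' + β • u) := by
      intro m hm
      have hmQ := le_Psat n P hm
      have hd0 := hQnn m hmQ
      set d : ℕ := (pairZ n m u).toNat with hd
      have hdval : pairZ n m u = (d : ℤ) := by omega
      have hmem : m + d • e ∈ Psat n P := hshiftk d m hmQ hdval
      have hge := sigma_pairZ_nonneg hmem hu'.2.2.1
      rw [pz_add_left, pz_nsmul_left] at hge
      rw [pz_add_right, pz_zsmul_right, hdval]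
      rw [← hβ] at hge
      nlinarith [hge]
    have hwsig : toQ n (u' + β • u) ∈ sigma n P := toQ_mem_sigma_of_pairZ hw
    have hdecompQ : toQ n (u' + β • u) + ((-β : ℤ) : ℚ) • toQ n u = toQ n u' := by
      funext i
      simp only [toQ, Pi.add_apply, Pi.smul_apply, smul_eq_mul]
      push_cast
      ring
    have hmβ : (0 : ℚ) ≤ ((-β : ℤ) : ℚ) := by exact_mod_cast (by omega : (0:ℤ) ≤ -β)
    have hβpos : (0 : ℚ) < ((-β : ℤ) : ℚ) := by exact_mod_cast (by omega : (0:ℤ) < -β)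
    have hsmul : ((-β : ℤ) : ℚ) • toQ n u ∈ sigma n P := sigma_smul_mem husig hmβ
    have hray : toQ n u' ∈ rayOf n (toQ n u') := ⟨1, zero_le_one, (one_smul _ _).symm⟩
    obtain ⟨-, hy⟩ := hu'.2.2.2 _ hwsig _ hsmul (by rw [hdecompQ]; exact hray)
    obtain ⟨c, hc, hcy⟩ := hy
    have hQu : toQ n u = (c / ((-β : ℤ) : ℚ)) • toQ n u' := by
      have hconj := congrArg (fun v => (((-β : ℤ) : ℚ))⁻¹ • v) hcy
      simp only [smul_smul, inv_mul_cancel₀ hβpos.ne', one_smul] at hconj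
      rw [hconj]
      rw [div_eq_inv_mul, mul_smul]
    have hcne : c ≠ 0 := by
      intro h0
      rw [h0, zero_div, zero_smul] at hQu
      exact htoQune hQu
    have hcpos : 0 < c / ((-β : ℤ) : ℚ) :=
      div_pos (lt_of_le_of_ne hc (Ne.symm hcne)) hβpos
    exact hne ((prim_eq_of_ray hprim hu'.1 hcpos hQu).symm)
  refine ⟨u, ν, ⟨⟨hprim, hext⟩, heu, hroot3⟩, hνne, ?_⟩
  intro m hm
  rw [coefD_spec D e hom m hm, hcoef m hm]

end Fwd
end ToricML

open ToricML in
theorem stmt_4 (K : Type) [Field K] [CharZero K] [IsAlgClosed K]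
    (n : ℕ) (hn : 1 ≤ n) (P : AddSubmonoid (Fin n → ℤ))
    (hfg : P.FG) (hgen : AddSubgroup.closure (P : Set (Fin n → ℤ)) = ⊤)
    (D : Derivation K (monAlg K n (Psat n P)) (monAlg K n (Psat n P)))
    (hD : D ≠ 0) (hom : ∃ e : Fin n → ℤ, IsHomog K n (Psat n P) D e) :
    IsLND D ↔ ∃ (u e : Fin n → ℤ) (lam : K), IsDemazureRoot n P u e ∧ lam ≠ 0 ∧
      ∀ (m : Fin n → ℤ) (hm : m ∈ Psat n P),
        ((D (chiP K n (Psat n P) m hm) : monAlg K n (Psat n P)) : Laurent K n)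
          = AddMonoidAlgebra.single (m + e) (lam * ((pairZ n m u : ℤ) : K)) := by
  obtain ⟨e, homE⟩ := hom
  constructor
  · intro hLND
    obtain ⟨u, lam, hdem, hlam, hform⟩ := forward_dir hgen D hD e homE hLND
    exact ⟨u, e, lam, hdem, hlam, hform⟩
  · rintro ⟨u, e', lam, hdem, hlam, hform⟩
    exact reverse_dir D u e' lam hlam hdem.1.2.2.1 hdem.2.1 hform
end
end

section
/- The monoid algebra K[P_sat] of the saturation P_sat = σ∨ ∩ M is integral over the monoid algebra K[P], i.e. every element of K[P_sat] is a root of a monic polynomial with coefficients in K[P]. -/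
set_option synthInstance.maxHeartbeats 1000000
set_option maxHeartbeats 1000000

noncomputable section

namespace ToricML

open Finsupp

lemma chi_integral (K : Type) [Field K] (n : ℕ) (P : AddSubmonoid (Fin n → ℤ))
    {m : Fin n → ℤ} (hm : m ∈ Psat n P) :
    IsIntegral (monAlg K n P) (chi K n m) := by
  obtain ⟨k, hk, hkm⟩ := (mem_coneOf_int n P m).mp hm
  refine ⟨Polynomial.X ^ k - Polynomial.C (chiP K n P (k • m) hkm),
    Polynomial.monic_X_pow_sub_C _ hk.ne', ?_⟩
  have h1 : (chi K n m) ^ k = chi K n (k • m) := by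
    simp [chi, AddMonoidAlgebra.single_pow]
  have h2 : algebraMap (monAlg K n P) (Laurent K n) (chiP K n P (k • m) hkm)
      = chi K n (k • m) := rfl
  simp only [Polynomial.eval₂_sub, Polynomial.eval₂_X_pow, Polynomial.eval₂_C]
  rw [h1, h2, sub_self]

lemma mem_integral (K : Type) [Field K] (n : ℕ) (P : AddSubmonoid (Fin n → ℤ))
    {x : Laurent K n} (hx : x ∈ monAlg K n (Psat n P)) :
    IsIntegral (monAlg K n P) x := by
  classical
  have : x ∈ integralClosure (monAlg K n P) (Laurent K n) := by
    have hrep : x = ∑ m ∈ x.coeff.support, AddMonoidAlgebra.single m (x.coeff m) := by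
      conv_lhs => rw [← AddMonoidAlgebra.sum_coeff_single x]
      rfl
    rw [hrep]
    apply Subalgebra.sum_mem
    intro m hmm
    have hsm : AddMonoidAlgebra.single m (x.coeff m)
        = algebraMap (monAlg K n P) (Laurent K n)
            ⟨algebraMap K (Laurent K n) (x.coeff m), (monAlg K n P).algebraMap_mem (x.coeff m)⟩
          * chi K n m := by
      show AddMonoidAlgebra.single m (x.coeff m) = algebraMap K (Laurent K n) (x.coeff m) * chi K n m
      rw [AddMonoidAlgebra.coe_algebraMap]
      show AddMonoidAlgebra.single m (x.coeff m)
        = (AddMonoidAlgebra.single 0 (x.coeff m)) * (AddMonoidAlgebra.single m 1)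
      rw [AddMonoidAlgebra.single_mul_single, zero_add, mul_one]
    rw [hsm]
    exact mul_mem ((integralClosure _ _).algebraMap_mem _)
      (chi_integral K n P (hx m hmm))
  exact this

end ToricML

open ToricML in
theorem stmt_6 (K : Type) [Field K] [CharZero K] [IsAlgClosed K]
    (n : ℕ) (hn : 1 ≤ n) (P : AddSubmonoid (Fin n → ℤ))
    (hfg : P.FG) (hgen : AddSubgroup.closure (P : Set (Fin n → ℤ)) = ⊤) :
    ∀ x ∈ monAlg K n (Psat n P),
      ∃ q : Polynomial (Laurent K n), q.Monic ∧ (∀ i : ℕ, q.coeff i ∈ monAlg K n P) ∧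
        q.eval x = 0 := by
  intro x hx
  obtain ⟨p, hmon, hev⟩ := mem_integral K n P hx
  refine ⟨p.map (algebraMap (monAlg K n P) (Laurent K n)), hmon.map _, ?_, ?_⟩
  · intro i
    rw [Polynomial.coeff_map]
    exact SetLike.coe_mem _
  · rw [Polynomial.eval_map]
    exact hev
end
end
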